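/- Let ℓ(s) = 1 + |log s| and ℓℓ(s) = 1 + log ℓ(s). For q ∈ [1,∞], α < 1/q', β ∈ ℝ, one has ‖s^{-1/q'} ℓ(s)^{-α} ℓℓ(s)^{-β}‖_{L^{q'}(r, 1-r)} ≈ ℓ(r)^{1/q' - α} ℓℓ(r)^{-β} near 0, with constants independent of r. -/

import Mathlib

/-!
For `H = ℓ^γ ℓℓ^{-b}` one computes on `(0, 1)`
`-H'(s) = s⁻¹ ℓ(s)^{γ-1} ℓℓ(s)^{-b} (γ - b / ℓℓ(s))`, and since `ℓℓ(s) → ∞` as `s → 0`, the last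
factor lies between `γ/2` and `γ + |b|` on some `(0, s₁]`. Hence `H` is strictly decreasing there
and `∫_r^{s₁} s⁻¹ ℓ^{γ-1} ℓℓ^{-b} ds ≈ H(r) - H(s₁) ≈ H(r)`, while the piece over `[s₁, 1]` is a
constant, dominated by `H(r) ≥ H(s₁)`. For `q' = p < ∞` the `p`-th power of the norm is this
integral with `γ = 1 - αp`, `b = βp`. For `q' = ∞` the norm is the essential supremum of
`H = ℓ^{-α} ℓℓ^{-β}` itself, which is `≈ H(r)` by the same monotonicity.
-/

open MeasureTheory Set
open scoped ENNReal

noncomputable def ell (s : ℝ) : ℝ := 1 + |Real.log s|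
noncomputable def ellell (s : ℝ) : ℝ := 1 + Real.log (ell s)

open Real Filter Topology

lemma one_le_ell (s : ℝ) : 1 ≤ ell s :=
  le_add_of_nonneg_right (abs_nonneg _)

lemma ell_pos (s : ℝ) : 0 < ell s :=
  one_pos.trans_le (one_le_ell s)

lemma one_le_ellell (s : ℝ) : 1 ≤ ellell s :=
  le_add_of_nonneg_right (log_nonneg (one_le_ell s))

lemma ellell_pos (s : ℝ) : 0 < ellell s :=
  one_pos.trans_le (one_le_ellell s)

lemma ell_eq_one_sub_log {s : ℝ} (h0 : 0 < s) (h1 : s ≤ 1) : ell s = 1 - log s := by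
  rw [ell, abs_of_nonpos (log_nonpos h0.le h1), sub_eq_add_neg]

lemma continuousOn_ell : ContinuousOn ell {0}ᶜ :=
  continuousOn_const.add continuousOn_log.abs

lemma continuousOn_ellell : ContinuousOn ellell {0}ᶜ :=
  continuousOn_const.add (continuousOn_ell.log fun s _ => (ell_pos s).ne')

lemma tendsto_ell_nhdsGT_zero : Tendsto ell (𝓝[>] 0) atTop :=
  tendsto_atTop_add_const_left _ 1 (tendsto_abs_atBot_atTop.comp tendsto_log_nhdsGT_zero)

lemma tendsto_ellell_nhdsGT_zero : Tendsto ellell (𝓝[>] 0) atTop :=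
  tendsto_atTop_add_const_left _ 1 (tendsto_log_atTop.comp tendsto_ell_nhdsGT_zero)

lemma hasDerivAt_ell {s : ℝ} (h0 : 0 < s) (h1 : s < 1) : HasDerivAt ell (-s⁻¹) s := by
  refine ((hasDerivAt_log h0.ne').const_sub 1).congr_of_eventuallyEq ?_
  filter_upwards [Ioo_mem_nhds h0 h1] with t ht
  exact ell_eq_one_sub_log ht.1 ht.2.le

lemma hasDerivAt_ellell {s : ℝ} (h0 : 0 < s) (h1 : s < 1) :
    HasDerivAt ellell (-s⁻¹ / ell s) s :=
  ((hasDerivAt_ell h0 h1).log (ell_pos s).ne').const_add 1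

noncomputable def ellPow (γ b s : ℝ) : ℝ := ell s ^ γ * ellell s ^ (-b)

noncomputable def ellDensity (γ b s : ℝ) : ℝ := s⁻¹ * ellPow (γ - 1) b s

lemma ellPow_pos (γ b s : ℝ) : 0 < ellPow γ b s :=
  mul_pos (rpow_pos_of_pos (ell_pos s) γ) (rpow_pos_of_pos (ellell_pos s) (-b))

lemma ellPow_rpow (γ b t s : ℝ) : ellPow γ b s ^ t = ellPow (γ * t) (b * t) s := by
  rw [ellPow, ellPow, mul_rpow (rpow_nonneg (ell_pos s).le _) (rpow_nonneg (ellell_pos s).le _),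
    ← rpow_mul (ell_pos s).le, ← rpow_mul (ellell_pos s).le, neg_mul]

lemma ellDensity_pos (γ b : ℝ) {s : ℝ} (hs : 0 < s) : 0 < ellDensity γ b s :=
  mul_pos (inv_pos.2 hs) (ellPow_pos _ _ _)

lemma continuousOn_ellPow (γ b : ℝ) : ContinuousOn (ellPow γ b) {0}ᶜ :=
  (continuousOn_ell.rpow_const fun s _ => Or.inl (ell_pos s).ne').mul
    (continuousOn_ellell.rpow_const fun s _ => Or.inl (ellell_pos s).ne')

lemma continuousOn_ellDensity (γ b : ℝ) : ContinuousOn (ellDensity γ b) {0}ᶜ :=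
  (continuousOn_inv₀.mono fun _ hs => hs).mul (continuousOn_ellPow _ _)

lemma hasDerivAt_ellPow (γ b : ℝ) {s : ℝ} (h0 : 0 < s) (h1 : s < 1) :
    HasDerivAt (ellPow γ b) (-(ellDensity γ b s * (γ - b / ellell s))) s := by
  have h := ((hasDerivAt_ell h0 h1).rpow_const (p := γ) (Or.inl (ell_pos s).ne')).mul
    ((hasDerivAt_ellell h0 h1).rpow_const (p := -b) (Or.inl (ellell_pos s).ne'))
  refine h.congr_deriv ?_
  have hL := ell_pos s
  have hM := ellell_pos s
  rw [ellDensity, ellPow, rpow_sub_one hL.ne', rpow_sub_one hM.ne']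
  field_simp
  ring

lemma exists_forall_le_mul_ellell {γ : ℝ} (hγ : 0 < γ) (b : ℝ) :
    ∃ s₁, 0 < s₁ ∧ s₁ ≤ 1 / 2 ∧ ∀ s ∈ Ioc 0 s₁, 2 * |b| ≤ γ * ellell s := by
  have hev : ∀ᶠ s in 𝓝[>] 0, 2 * |b| / γ ≤ ellell s :=
    tendsto_ellell_nhdsGT_zero.eventually_ge_atTop _
  obtain ⟨u, hu, hsub⟩ := mem_nhdsGT_iff_exists_Ioc_subset.1 hev
  refine ⟨min u (1 / 2), lt_min hu (by norm_num), min_le_right _ _, fun s hs => ?_⟩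
  exact (div_le_iff₀' hγ).1 (hsub (Ioc_subset_Ioc_right (min_le_left _ _) hs))

lemma half_le_sub_div_ellell {γ b s : ℝ} (h : 2 * |b| ≤ γ * ellell s) :
    γ / 2 ≤ γ - b / ellell s := by
  have : b / ellell s ≤ γ / 2 := by
    rw [div_le_iff₀ (ellell_pos s)]
    linarith [le_abs_self b]
  linarith

lemma sub_div_ellell_le (γ b s : ℝ) : γ - b / ellell s ≤ γ + |b| := by
  have : |b / ellell s| ≤ |b| := by
    rw [abs_div, abs_of_pos (ellell_pos s)]
    exact div_le_self (abs_nonneg b) (one_le_ellell s)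
  linarith [neg_abs_le (b / ellell s)]

lemma strictAntiOn_ellPow {γ b s₁ : ℝ} (hγ : 0 < γ) (hs₁ : s₁ < 1)
    (hth : ∀ s ∈ Ioc 0 s₁, 2 * |b| ≤ γ * ellell s) :
    StrictAntiOn (ellPow γ b) (Ioc 0 s₁) := by
  have hderiv : ∀ s ∈ Ioc 0 s₁, HasDerivAt (ellPow γ b) _ s :=
    fun s hs => hasDerivAt_ellPow γ b hs.1 (hs.2.trans_lt hs₁)
  refine strictAntiOn_of_deriv_neg (convex_Ioc 0 s₁)
    (fun s hs => (hderiv s hs).continuousAt.continuousWithinAt) fun s hs => ?_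
  rw [interior_Ioc] at hs
  rw [(hderiv s (Ioo_subset_Ioc_self hs)).deriv, neg_lt_zero]
  exact mul_pos (ellDensity_pos γ b hs.1)
    ((half_pos hγ).trans_le (half_le_sub_div_ellell (hth s (Ioo_subset_Ioc_self hs))))

section Integrals

variable {r t : ℝ}

lemma intervalIntegrable_ellDensity (γ b : ℝ) (hr : 0 < r) (hrt : r ≤ t) :
    IntervalIntegrable (ellDensity γ b) volume r t :=
  ((continuousOn_ellDensity γ b).mono fun _ hs => (hr.trans_le hs.1).ne').intervalIntegrable_of_Icc
    hrt

lemma intervalIntegrable_ellDensity_mul (γ b : ℝ) (hr : 0 < r) (hrt : r ≤ t) :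
    IntervalIntegrable (fun s => ellDensity γ b s * (γ - b / ellell s)) volume r t := by
  have hsub : Icc r t ⊆ {0}ᶜ := fun _ hs => (hr.trans_le hs.1).ne'
  exact (((continuousOn_ellDensity γ b).mono hsub).mul (continuousOn_const.sub
    (continuousOn_const.div (continuousOn_ellell.mono hsub)
      fun s _ => (ellell_pos s).ne'))).intervalIntegrable_of_Icc hrt

lemma integral_ellDensity_mul_eq {γ b : ℝ} (hr : 0 < r) (hrt : r ≤ t) (ht : t < 1) :
    ∫ s in r..t, ellDensity γ b s * (γ - b / ellell s) = ellPow γ b r - ellPow γ b t := by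
  have hftc := intervalIntegral.integral_eq_sub_of_hasDerivAt
    (fun s hs => hasDerivAt_ellPow γ b (hr.trans_le (uIcc_of_le hrt ▸ hs).1)
      ((uIcc_of_le hrt ▸ hs).2.trans_lt ht)) (intervalIntegrable_ellDensity_mul γ b hr hrt).neg
  rw [intervalIntegral.integral_neg] at hftc
  linarith

lemma mul_integral_ellDensity_le {γ b : ℝ} (hr : 0 < r) (hrt : r ≤ t) (ht : t < 1)
    (hth : ∀ s ∈ Icc r t, 2 * |b| ≤ γ * ellell s) :
    γ / 2 * ∫ s in r..t, ellDensity γ b s ≤ ellPow γ b r - ellPow γ b t := by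
  rw [← integral_ellDensity_mul_eq hr hrt ht, ← intervalIntegral.integral_const_mul]
  refine intervalIntegral.integral_mono_on hrt
    ((intervalIntegrable_ellDensity γ b hr hrt).const_mul _)
    (intervalIntegrable_ellDensity_mul γ b hr hrt) fun s hs => ?_
  rw [mul_comm]
  exact mul_le_mul_of_nonneg_left (half_le_sub_div_ellell (hth s hs))
    (ellDensity_pos γ b (hr.trans_le hs.1)).le

lemma sub_le_mul_integral_ellDensity {γ b : ℝ} (hr : 0 < r) (hrt : r ≤ t) (ht : t < 1) :
    ellPow γ b r - ellPow γ b t ≤ (γ + |b|) * ∫ s in r..t, ellDensity γ b s := by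
  rw [← integral_ellDensity_mul_eq hr hrt ht, ← intervalIntegral.integral_const_mul]
  refine intervalIntegral.integral_mono_on hrt (intervalIntegrable_ellDensity_mul γ b hr hrt)
    ((intervalIntegrable_ellDensity γ b hr hrt).const_mul _) fun s hs => ?_
  rw [mul_comm (γ + |b|)]
  exact mul_le_mul_of_nonneg_left (sub_div_ellell_le γ b s)
    (ellDensity_pos γ b (hr.trans_le hs.1)).le

end Integrals

lemma ofReal_le_eLpNormEssSup_restrict {X : Type*} [MeasurableSpace X] {μ : Measure X}
    {f : X → ℝ} {s : Set X} {c : ℝ} (hs : MeasurableSet s) (hμs : μ s ≠ 0)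
    (hf : ∀ x ∈ s, c ≤ f x) : ENNReal.ofReal c ≤ eLpNormEssSup f (μ.restrict s) := by
  rw [eLpNormEssSup, ← essSup_const (ENNReal.ofReal c) (by rwa [Ne, Measure.restrict_eq_zero])]
  refine essSup_mono_ae ?_
  filter_upwards [ae_restrict_mem hs] with x hx
  exact (ENNReal.ofReal_le_ofReal (hf x hx)).trans (ofReal_le_enorm _)

lemma ofReal_le_eLpNormEssSup_restrict_Ioo {f : ℝ → ℝ} {a b c : ℝ} (hac : a < c) (hcb : c ≤ b)
    (hf : AntitoneOn f (Icc a c)) (hfa : ContinuousWithinAt f (Ioi a) a) :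
    ENNReal.ofReal (f a) ≤ eLpNormEssSup f (volume.restrict (Ioo a b)) := by
  -- `f ≥ f x` on `(a, x)`; then let `x → a⁺`.
  refine le_of_tendsto (ENNReal.continuous_ofReal.continuousAt.tendsto.comp hfa) ?_
  filter_upwards [Ioo_mem_nhdsGT hac] with x hx
  calc ENNReal.ofReal (f x) ≤ eLpNormEssSup f (volume.restrict (Ioo a x)) :=
        ofReal_le_eLpNormEssSup_restrict measurableSet_Ioo (by simp [hx.1])
          fun y hy => hf ⟨hy.1.le, hy.2.le.trans hx.2.le⟩ ⟨hx.1.le, hx.2.le⟩ hy.2.le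
    _ ≤ eLpNormEssSup f (volume.restrict (Ioo a b)) :=
        eLpNormEssSup_mono_measure f (Measure.absolutelyContinuous_of_le
          (Measure.restrict_mono (Ioo_subset_Ioo_right (hx.2.le.trans hcb)) le_rfl))

def ComparableNearZero (F : ℝ → ℝ≥0∞) (G : ℝ → ℝ) : Prop :=
  ∃ c C r₀ : ℝ, 0 < c ∧ 0 < C ∧ 0 < r₀ ∧ r₀ ≤ 1 / 4 ∧
    ∀ r ∈ Ioo (0 : ℝ) r₀, ENNReal.ofReal (c * G r) ≤ F r ∧ F r ≤ ENNReal.ofReal (C * G r)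

namespace ComparableNearZero

variable {F F' : ℝ → ℝ≥0∞} {G : ℝ → ℝ}

lemma congr_left (h : ComparableNearZero F G) (hF : ∀ r ∈ Ioo (0 : ℝ) (1 / 4), F r = F' r) :
    ComparableNearZero F' G := by
  obtain ⟨c, C, r₀, hc, hC, hr₀, hr₀', h⟩ := h
  refine ⟨c, C, r₀, hc, hC, hr₀, hr₀', fun r hr => ?_⟩
  rw [← hF r ⟨hr.1, hr.2.trans_le hr₀'⟩]
  exact h r hr

lemma rpow (h : ComparableNearZero F G) (hG : ∀ r, 0 ≤ G r) {t : ℝ} (ht : 0 < t) :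
    ComparableNearZero (fun r => F r ^ t) (fun r => G r ^ t) := by
  obtain ⟨c, C, r₀, hc, hC, hr₀, hr₀', h⟩ := h
  refine ⟨c ^ t, C ^ t, r₀, rpow_pos_of_pos hc t, rpow_pos_of_pos hC t, hr₀, hr₀', fun r hr => ?_⟩
  rw [← mul_rpow hc.le (hG r), ← mul_rpow hC.le (hG r),
    ← ENNReal.ofReal_rpow_of_nonneg (mul_nonneg hc.le (hG r)) ht.le,
    ← ENNReal.ofReal_rpow_of_nonneg (mul_nonneg hC.le (hG r)) ht.le]
  exact ⟨ENNReal.rpow_le_rpow (h r hr).1 ht.le, ENNReal.rpow_le_rpow (h r hr).2 ht.le⟩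

end ComparableNearZero

theorem comparableNearZero_eLpNormEssSup_ellPow {γ : ℝ} (hγ : 0 < γ) (b : ℝ) :
    ComparableNearZero (fun r => eLpNormEssSup (ellPow γ b) (volume.restrict (Ioo r (1 - r))))
      (ellPow γ b) := by
  obtain ⟨s₁, hs₁, hs₁_le, hth⟩ := exists_forall_le_mul_ellell hγ b
  have hanti := strictAntiOn_ellPow hγ (by linarith) hth
  obtain ⟨M, hM⟩ := isCompact_Icc.bddAbove_image
    ((continuousOn_ellPow γ b).mono (t := Icc s₁ 1) fun s hs => (hs₁.trans_le hs.1).ne')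
  set C := max 1 (M / ellPow γ b s₁)
  refine ⟨1, C, s₁ / 2, one_pos, lt_max_of_lt_left one_pos, half_pos hs₁, by linarith,
    fun r hr => ⟨?_, ?_⟩⟩
  · rw [one_mul]
    exact ofReal_le_eLpNormEssSup_restrict_Ioo (c := s₁) (by linarith [hr.2]) (by linarith [hr.2])
      (hanti.antitoneOn.mono fun s hs => ⟨hr.1.trans_le hs.1, hs.2⟩)
      (hasDerivAt_ellPow γ b hr.1 (by linarith [hr.2])).continuousAt.continuousWithinAt
  · have hHs₁ : ellPow γ b s₁ ≤ ellPow γ b r :=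
      hanti.antitoneOn ⟨hr.1, by linarith [hr.2]⟩ ⟨hs₁, le_rfl⟩ (by linarith [hr.2])
    refine eLpNormEssSup_le_of_ae_bound ?_
    filter_upwards [ae_restrict_mem measurableSet_Ioo] with x hx
    rw [norm_of_nonneg (ellPow_pos γ b x).le]
    rcases le_or_gt x s₁ with hxs₁ | hxs₁
    · calc ellPow γ b x ≤ ellPow γ b r :=
            hanti.antitoneOn ⟨hr.1, by linarith [hr.2]⟩ ⟨hr.1.trans hx.1, hxs₁⟩ hx.1.le
        _ ≤ C * ellPow γ b r := le_mul_of_one_le_left (ellPow_pos γ b r).le (le_max_left _ _)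
    · calc ellPow γ b x ≤ M := hM ⟨x, ⟨hxs₁.le, by linarith [hx.2, hr.1]⟩, rfl⟩
        _ = M / ellPow γ b s₁ * ellPow γ b s₁ := (div_mul_cancel₀ _ (ellPow_pos γ b s₁).ne').symm
        _ ≤ C * ellPow γ b r :=
            mul_le_mul (le_max_right _ _) hHs₁ (ellPow_pos γ b s₁).le
              (zero_le_one.trans (le_max_left _ _))

lemma integral_ellDensity_bounds {γ b r s₁ : ℝ} (hγ : 0 < γ) (hr : 0 < r) (hrs₁ : r ≤ s₁)
    (hs₁ : s₁ ≤ 1 - r) (hth : ∀ s ∈ Icc r s₁, 2 * |b| ≤ γ * ellell s) :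
    ellPow γ b r - ellPow γ b s₁ ≤ (γ + |b|) * ∫ s in r..1 - r, ellDensity γ b s ∧
      γ / 2 * ∫ s in r..1 - r, ellDensity γ b s ≤
        ellPow γ b r - ellPow γ b s₁ + γ / 2 * ∫ s in s₁..1, ellDensity γ b s := by
  have hs₁0 : 0 < s₁ := hr.trans_le hrs₁
  rw [← intervalIntegral.integral_add_adjacent_intervals
    (intervalIntegrable_ellDensity γ b hr hrs₁) (intervalIntegrable_ellDensity γ b hs₁0 hs₁)]
  have hhead_le := mul_integral_ellDensity_le hr hrs₁ (by linarith) hth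
  have hhead_ge := sub_le_mul_integral_ellDensity (γ := γ) (b := b) hr hrs₁ (by linarith)
  have htail_nonneg : 0 ≤ ∫ s in s₁..1 - r, ellDensity γ b s :=
    intervalIntegral.integral_nonneg hs₁ fun s hs => (ellDensity_pos γ b (hs₁0.trans_le hs.1)).le
  have htail_le : ∫ s in s₁..1 - r, ellDensity γ b s ≤ ∫ s in s₁..1, ellDensity γ b s :=
    intervalIntegral.integral_mono_interval le_rfl hs₁ (by linarith)
      (by filter_upwards [ae_restrict_mem measurableSet_Ioc] with s hs
          exact (ellDensity_pos γ b (hs₁0.trans hs.1)).le)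
      (intervalIntegrable_ellDensity γ b hs₁0 (by linarith))
  rw [mul_add, mul_add]
  constructor
  · nlinarith [abs_nonneg b]
  · nlinarith

theorem comparableNearZero_integral_ellDensity {γ : ℝ} (hγ : 0 < γ) (b : ℝ) :
    ComparableNearZero (fun r => ENNReal.ofReal (∫ s in r..1 - r, ellDensity γ b s))
      (ellPow γ b) := by
  obtain ⟨s₁, hs₁, hs₁_le, hth⟩ := exists_forall_le_mul_ellell hγ b
  have hanti := strictAntiOn_ellPow hγ (by linarith) hth
  set K := ∫ s in s₁..1, ellDensity γ b s
  have hK : 0 ≤ K := intervalIntegral.integral_nonneg (by linarith)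
    fun s hs => (ellDensity_pos γ b (hs₁.trans_le hs.1)).le
  set A := ellPow γ b s₁
  set B := ellPow γ b (s₁ / 2)
  have hA : 0 < A := ellPow_pos γ b s₁
  have hB : 0 < B := ellPow_pos γ b (s₁ / 2)
  have hc : 0 < 1 - A / B := by
    rw [sub_pos, div_lt_one hB]
    exact hanti ⟨half_pos hs₁, by linarith⟩ ⟨hs₁, le_rfl⟩ (by linarith)
  refine ⟨(1 - A / B) / (γ + |b|), 2 / γ + K / A, s₁ / 2, by positivity, by positivity,
    half_pos hs₁, by linarith, fun r ⟨hr0, hr⟩ => ?_⟩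
  have hBr : B ≤ ellPow γ b r :=
    hanti.antitoneOn ⟨hr0, by linarith⟩ ⟨half_pos hs₁, by linarith⟩ hr.le
  have hAr : A ≤ ellPow γ b r := hanti.antitoneOn ⟨hr0, by linarith⟩ ⟨hs₁, le_rfl⟩ (by linarith)
  obtain ⟨hlow, hupp⟩ := integral_ellDensity_bounds hγ hr0 (by linarith) (by linarith)
    fun s hs => hth s ⟨hr0.trans_le hs.1, hs.2⟩
  constructor <;> apply ENNReal.ofReal_le_ofReal
  -- `ellPow γ b r ≥ B > A` makes `ellPow γ b r - A` a fixed fraction of `ellPow γ b r`.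
  · have : A ≤ A / B * ellPow γ b r := by
      rw [div_mul_eq_mul_div, le_div_iff₀ hB]
      exact mul_le_mul_of_nonneg_left hBr hA.le
    rw [div_mul_eq_mul_div, div_le_iff₀' (by positivity)]
    linarith
  · have : K ≤ K / A * ellPow γ b r := by
      rw [div_mul_eq_mul_div, le_div_iff₀ hA]
      exact mul_le_mul_of_nonneg_left hAr hK
    rw [add_mul, div_mul_eq_mul_div, ← sub_le_iff_le_add, le_div_iff₀ hγ]
    nlinarith

lemma eLpNorm_restrict_Ioo_eq {p : ℝ≥0∞} (hp0 : p ≠ 0) (hp : p ≠ ⊤) (α β : ℝ) {a b : ℝ}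
    (ha : 0 < a) (hab : a ≤ b) :
    eLpNorm (fun s => s ^ (-p.toReal⁻¹) * ell s ^ (-α) * ellell s ^ (-β)) p
        (volume.restrict (Ioo a b)) =
      ENNReal.ofReal (∫ s in a..b, ellDensity (1 - α * p.toReal) (β * p.toReal) s) ^
        p.toReal⁻¹ := by
  have hp' := ENNReal.toReal_pos hp0 hp
  have hint : IntegrableOn (ellDensity (1 - α * p.toReal) (β * p.toReal)) (Ioo a b) :=
    (((continuousOn_ellDensity _ _).mono fun _ hs =>
      (ha.trans_le hs.1).ne').integrableOn_Icc).mono_set Ioo_subset_Icc_self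
  rw [eLpNorm_eq_lintegral_rpow_enorm_toReal hp0 hp, one_div, intervalIntegral.integral_of_le hab,
    integral_Ioc_eq_integral_Ioo, ofReal_integral_eq_lintegral_ofReal hint
      (by filter_upwards [ae_restrict_mem measurableSet_Ioo] with s hs
          exact (ellDensity_pos _ _ (ha.trans hs.1)).le)]
  congr 1
  refine setLIntegral_congr_fun measurableSet_Ioo fun s hs => ?_
  have hs0 : 0 < s := ha.trans hs.1
  have hpow : ell s ^ (-α) * ellell s ^ (-β) = ellPow (-α) β s := rfl
  rw [mul_assoc, hpow, enorm_of_nonneg (mul_pos (rpow_pos_of_pos hs0 _) (ellPow_pos _ _ _)).le,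
    ENNReal.ofReal_rpow_of_nonneg (mul_pos (rpow_pos_of_pos hs0 _) (ellPow_pos _ _ _)).le hp'.le,
    mul_rpow (rpow_pos_of_pos hs0 _).le (ellPow_pos _ _ _).le, ← rpow_mul hs0.le, ellPow_rpow,
    neg_mul, inv_mul_cancel₀ hp'.ne', rpow_neg_one, ellDensity, sub_sub_cancel_left, neg_mul]

theorem stmt12_general (q q' : ℝ≥0∞) (hconj : 1 / q + 1 / q' = 1)
    (α β : ℝ) (hα : α < (1 / q').toReal) :
    ∃ c C r₀ : ℝ, 0 < c ∧ 0 < C ∧ 0 < r₀ ∧ r₀ ≤ 1 / 4 ∧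
      ∀ r ∈ Set.Ioo (0 : ℝ) r₀,
        ENNReal.ofReal (c * (ell r ^ ((1 / q').toReal - α) * ellell r ^ (-β))) ≤
            eLpNorm (fun s : ℝ => s ^ (-(1 / q').toReal) * ell s ^ (-α) * ellell s ^ (-β))
              q' (volume.restrict (Set.Ioo r (1 - r))) ∧
          eLpNorm (fun s : ℝ => s ^ (-(1 / q').toReal) * ell s ^ (-α) * ellell s ^ (-β))
              q' (volume.restrict (Set.Ioo r (1 - r))) ≤
            ENNReal.ofReal (C * (ell r ^ ((1 / q').toReal - α) * ellell r ^ (-β))) := by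
  have hq'0 : q' ≠ 0 := by
    rintro rfl
    simp at hconj
  show ComparableNearZero (fun r => eLpNorm _ q' (volume.restrict (Ioo r (1 - r))))
    (ellPow ((1 / q').toReal - α) β)
  rcases eq_or_ne q' ⊤ with rfl | hq'top
  · simp only [one_div, ENNReal.inv_top, ENNReal.toReal_zero, neg_zero, rpow_zero, one_mul,
      eLpNorm_exponent_top, zero_sub] at hα ⊢
    exact comparableNearZero_eLpNormEssSup_ellPow (neg_pos.2 hα) β
  set p := q'.toReal
  have hp : 0 < p := ENNReal.toReal_pos hq'0 hq'top
  rw [one_div, ENNReal.toReal_inv] at hα ⊢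
  have hγ : 0 < 1 - α * p := by
    have := mul_lt_mul_of_pos_right hα hp
    rw [inv_mul_cancel₀ hp.ne'] at this
    linarith
  have key := (comparableNearZero_integral_ellDensity hγ (β * p)).rpow
    (fun r => (ellPow_pos _ _ r).le) (inv_pos.2 hp)
  simp_rw [ellPow_rpow] at key
  rw [show (1 - α * p) * p⁻¹ = p⁻¹ - α by field_simp, show β * p * p⁻¹ = β by field_simp] at key
  exact key.congr_left fun r hr =>
    (eLpNorm_restrict_Ioo_eq hq'0 hq'top α β hr.1 (by linarith [hr.2])).symm

/-- For `α < 1/q'`: `‖s^{-1/q'} ℓ(s)^{-α} ℓℓ(s)^{-β}‖_{L^{q'}(r,1-r)} ≈ ℓ(r)^{1/q'-α} ℓℓ(r)^{-β}`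
near `0`, with constants independent of `r`. -/
theorem stmt12 (q q' : ℝ≥0∞) (hq : 1 ≤ q) (hconj : 1 / q + 1 / q' = 1)
    (α β : ℝ) (hα : α < (1 / q').toReal) :
    ∃ c C r₀ : ℝ, 0 < c ∧ 0 < C ∧ 0 < r₀ ∧ r₀ ≤ 1 / 4 ∧
      ∀ r ∈ Set.Ioo (0 : ℝ) r₀,
        ENNReal.ofReal (c * (ell r ^ ((1 / q').toReal - α) * ellell r ^ (-β))) ≤
            eLpNorm (fun s : ℝ => s ^ (-(1 / q').toReal) * ell s ^ (-α) * ellell s ^ (-β))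
              q' (volume.restrict (Set.Ioo r (1 - r))) ∧
          eLpNorm (fun s : ℝ => s ^ (-(1 / q').toReal) * ell s ^ (-α) * ellell s ^ (-β))
              q' (volume.restrict (Set.Ioo r (1 - r))) ≤
            ENNReal.ofReal (C * (ell r ^ ((1 / q').toReal - α) * ellell r ^ (-β))) :=
  stmt12_general q q' hconj α β hα
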